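/- arXiv:2006.11795 — 4 statements merged into one kernel-verified Lean document; each statement's English description precedes it below -/
import Mathlib

section
/- Let T be a lattice triangle contained in the closed positive quadrant ℝ²_{≥0} that does not contain the origin. Suppose no side of T lies on a coordinate axis, or at most one side lies on a single coordinate axis. Then the quantity 2·Area(T) − ℓ_x(T) − ℓ_y(T) is non-negative, where ℓ_x(T) (resp. ℓ_y(T)) is the lattice length of T ∩ {y = 0} (resp. T ∩ {x = 0}) if that intersection is a segment, and 0 otherwise. -/
open MeasureTheory

/-- The lattice length of `T ∩ {y = 0}`: the number of lattice points on it
minus one (`0` if the intersection has at most one lattice point). -/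
noncomputable def latLenX (T : Set (ℝ × ℝ)) : ℕ :=
  Set.ncard {t : ℤ | ((t : ℝ), (0 : ℝ)) ∈ T} - 1

/-- The lattice length of `T ∩ {x = 0}`. -/
noncomputable def latLenY (T : Set (ℝ × ℝ)) : ℕ :=
  Set.ncard {t : ℤ | ((0 : ℝ), (t : ℝ)) ∈ T} - 1

/-!
If two vertices of `T` lie on the x-axis, the third one is a lattice point off the axis, so its
height is at least `1` and `2·Area(T) = base · height ≥ base ≥ ℓ_x(T)`. For a set of points in a
closed half-plane, the boundary line meets their convex hull only in the convex hull of the points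
lying on it; hence if at most one vertex lies on an axis, `T` meets that axis in at most one point
and the corresponding lattice length vanishes. Since no two sides of `T` lie on different axes,
one of `ℓ_x(T)`, `ℓ_y(T)` vanishes and the other is at most `2·Area(T)`. The y-axis case is the
x-axis case after swapping the coordinates.
-/

open Pointwise

lemma smul_add_smul_add_smul_mem_convexHull {E : Type*} [AddCommGroup E] [Module ℝ E]
    {p q r : E} {a b c : ℝ} (ha : 0 ≤ a) (hb : 0 ≤ b) (hc : 0 ≤ c) (habc : a + b + c = 1) :
    a • p + b • q + c • r ∈ convexHull ℝ {p, q, r} := by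
  have hmem : ∀ x ∈ ({p, q, r} : Set E), x ∈ convexHull ℝ {p, q, r} :=
    fun x hx => subset_convexHull ℝ _ hx
  have := (convex_convexHull ℝ ({p, q, r} : Set E)).sum_mem (t := Finset.univ)
    (w := ![a, b, c]) (z := ![p, q, r]) (by simp [Fin.forall_fin_succ, ha, hb, hc])
    (by simp [Fin.sum_univ_three, habc]) (by simp [Fin.forall_fin_succ, hmem])
  simpa [Fin.sum_univ_three] using this

lemma convexHull_inter_subset_of_nonneg {E : Type*} [AddCommGroup E] [Module ℝ E]
    (f : E →ₗ[ℝ] ℝ) {s : Set E} (hs : ∀ z ∈ s, 0 ≤ f z) :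
    convexHull ℝ s ∩ {x | f x = 0} ⊆ convexHull ℝ (s ∩ {x | f x = 0}) := by
  classical
  rintro x ⟨hx, hfx⟩
  obtain ⟨ι, t, w, z, hw0, hw1, hz, rfl⟩ := (convexHull_eq s).subset hx
  replace hfx : ∑ i ∈ t, w i * f (z i) = 0 := by
    simpa [Finset.centerMass_eq_of_sum_1 _ _ hw1] using hfx
  have hterm : ∀ i ∈ t, w i * f (z i) = 0 :=
    (Finset.sum_eq_zero_iff_of_nonneg fun i hi => mul_nonneg (hw0 i hi) (hs _ (hz i hi))).1 hfx
  rw [← Finset.centerMass_filter_ne_zero]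
  refine Finset.centerMass_mem_convexHull _ (fun i hi => hw0 i (Finset.mem_filter.1 hi).1)
    (by rw [Finset.sum_filter_ne_zero, hw1]; exact one_pos) fun i hi => ?_
  obtain ⟨hi, hwi⟩ := Finset.mem_filter.1 hi
  exact ⟨hz i hi, (mul_eq_zero.1 (hterm i hi)).resolve_left hwi⟩

lemma exists_triple_eq_of_mem_of_mem {α : Type*} {p q r u v : α}
    (hu : u ∈ ({p, q, r} : Set α)) (hv : v ∈ ({p, q, r} : Set α)) (huv : u ≠ v) :
    ∃ w, ({p, q, r} : Set α) = {u, v, w} := by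
  rcases hu with rfl | rfl | rfl <;> rcases hv with rfl | rfl | rfl <;>
    first
    | exact absurd rfl huv
    | exact ⟨r, rfl⟩
    | exact ⟨p, by ext; simp only [Set.mem_insert_iff, Set.mem_singleton_iff]; tauto⟩
    | exact ⟨q, by ext; simp only [Set.mem_insert_iff, Set.mem_singleton_iff]; tauto⟩
    | exact ⟨r, by ext; simp only [Set.mem_insert_iff, Set.mem_singleton_iff]; tauto⟩

lemma exists_segment_subset_of_not_subsingleton {E : Type*} [AddCommGroup E] [Module ℝ E]
    {C : Set E} (hC : Convex ℝ C) {p q r : E} (h : ¬ ({p, q, r} ∩ C).Subsingleton) :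
    segment ℝ p q ⊆ C ∨ segment ℝ q r ⊆ C ∨ segment ℝ r p ⊆ C := by
  obtain ⟨u, ⟨hu, huC⟩, v, ⟨hv, hvC⟩, huv⟩ := Set.not_subsingleton_iff.1 h
  have huv' := hC.segment_subset huC hvC
  have hvu' := hC.segment_subset hvC huC
  rcases hu with rfl | rfl | rfl <;> rcases hv with rfl | rfl | rfl <;> simp_all

lemma collinear_of_subset_setOf_snd_eq_zero {s : Set (ℝ × ℝ)} (h : s ⊆ {v | v.2 = 0}) :
    Collinear ℝ s :=
  (collinear_iff_exists_forall_eq_smul_vadd s).2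
    ⟨0, (1, 0), fun x hx => ⟨x.1, by ext <;> simp [show x.2 = 0 from h hx]⟩⟩

lemma collinear_of_subset_setOf_fst_eq_zero {s : Set (ℝ × ℝ)} (h : s ⊆ {v | v.1 = 0}) :
    Collinear ℝ s :=
  (collinear_iff_exists_forall_eq_smul_vadd s).2
    ⟨0, (0, 1), fun x hx => ⟨x.2, by ext <;> simp [show x.1 = 0 from h hx]⟩⟩

def stdTriangle : Set (ℝ × ℝ) := {x | 0 ≤ x.1 ∧ 0 ≤ x.2 ∧ x.1 + x.2 ≤ 1}

lemma convexHull_zero_inl_inr : convexHull ℝ {0, (1, 0), (0, 1)} = stdTriangle := by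
  refine (convexHull_min ?_ ?_).antisymm fun x ⟨h1, h2, h3⟩ => ?_
  · rintro x (rfl | rfl | rfl) <;> simp [stdTriangle]
  · intro x ⟨hx1, hx2, hx3⟩ y ⟨hy1, hy2, hy3⟩ a b ha hb hab
    simp only [stdTriangle, Set.mem_ofPred_eq, Prod.fst_add, Prod.snd_add, Prod.smul_fst,
      Prod.smul_snd, smul_eq_mul]
    refine ⟨by positivity, by positivity, ?_⟩
    nlinarith
  · convert smul_add_smul_add_smul_mem_convexHull (p := (0 : ℝ × ℝ)) (q := (1, 0)) (r := (0, 1))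
      (sub_nonneg.2 h3) h1 h2 (by ring) using 1
    ext <;> simp

lemma volume_setOf_fst_add_snd_eq (c : ℝ) : volume {x : ℝ × ℝ | x.1 + x.2 = c} = 0 := by
  have hm : MeasurableSet {x : ℝ × ℝ | x.1 + x.2 = c} :=
    measurableSet_eq_fun (by fun_prop) measurable_const
  rw [Measure.volume_eq_prod, Measure.prod_apply hm]
  have hslice : ∀ a : ℝ, Prod.mk a ⁻¹' {x : ℝ × ℝ | x.1 + x.2 = c} = {c - a} := by
    intro a; ext y; simp [eq_sub_iff_add_eq']
  simp [hslice]

lemma volume_stdTriangle : volume stdTriangle = 2⁻¹ := by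
  -- the reflection of `stdTriangle` through `(1/2, 1/2)` tiles the unit square together with it
  set S' := (fun x => ((1, 1) : ℝ × ℝ) - x) ⁻¹' stdTriangle
  have hS' : volume S' = volume stdTriangle := by
    have : S' = -((fun x => ((1, 1) : ℝ × ℝ) + x) ⁻¹' stdTriangle) := by
      ext x; simp [S', sub_eq_add_neg]
    rw [this, Measure.measure_neg, measure_preimage_add]
  have hunion : stdTriangle ∪ S' = Set.Icc 0 1 := by
    ext x
    simp only [stdTriangle, S', Set.mem_union, Set.mem_preimage, Set.mem_ofPred_eq, Prod.fst_sub,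
      Prod.snd_sub, Set.mem_Icc, Prod.le_def, Prod.fst_zero, Prod.snd_zero, Prod.fst_one,
      Prod.snd_one]
    constructor
    · rintro (h | h) <;> refine ⟨⟨?_, ?_⟩, ?_, ?_⟩ <;> linarith
    · rintro ⟨⟨h1, h2⟩, h3, h4⟩
      rcases le_total (x.1 + x.2) 1 with h | h
      · exact Or.inl ⟨h1, h2, h⟩
      · exact Or.inr ⟨by linarith, by linarith, by linarith⟩
  have hinter : volume (stdTriangle ∩ S') = 0 := by
    refine measure_mono_null (fun x hx => ?_) (volume_setOf_fst_add_snd_eq 1)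
    simp only [stdTriangle, S', Set.mem_inter_iff, Set.mem_preimage, Set.mem_ofPred_eq,
      Prod.fst_sub, Prod.snd_sub] at hx ⊢
    linarith [hx.1.2.2, hx.2.2.2]
  have hmeas : NullMeasurableSet S' volume := by
    refine MeasurableSet.nullMeasurableSet (measurable_const.sub measurable_id ?_)
    simp only [stdTriangle]; measurability
  have hsquare : volume (Set.Icc (0 : ℝ × ℝ) 1) = 1 := by
    rw [Set.Icc_prod_eq, Measure.volume_eq_prod, Measure.prod_prod]
    simp
  have h := measure_union_add_inter₀ stdTriangle hmeas
  rw [hunion, hinter, hS', add_zero, hsquare] at h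
  exact ENNReal.eq_inv_of_mul_eq_one_left (by rw [mul_two, h])

lemma volume_convexHull_zero_triple (u v : ℝ × ℝ) :
    volume (convexHull ℝ {0, u, v}) = ENNReal.ofReal (|u.1 * v.2 - u.2 * v.1| / 2) := by
  set L := Matrix.toLin (Module.Basis.finTwoProd ℝ) (Module.Basis.finTwoProd ℝ)
    !![u.1, v.1; u.2, v.2]
  have himage : L '' convexHull ℝ {0, (1, 0), (0, 1)} = convexHull ℝ {0, u, v} := by
    rw [LinearMap.image_convexHull]
    simp [L, Set.image_insert_eq, Matrix.toLin_finTwoProd_apply]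
    rfl
  rw [← himage, Measure.addHaar_image_linearMap, convexHull_zero_inl_inr, volume_stdTriangle,
    LinearMap.det_toLin, Matrix.det_fin_two_of, ENNReal.ofReal_div_of_pos two_pos,
    ENNReal.ofReal_ofNat, div_eq_mul_inv, mul_comm v.1]

lemma volume_convexHull_triple (p q r : ℝ × ℝ) :
    volume (convexHull ℝ {p, q, r}) =
      ENNReal.ofReal (|(q.1 - p.1) * (r.2 - p.2) - (q.2 - p.2) * (r.1 - p.1)| / 2) := by
  have htranslate : ({p, q, r} : Set (ℝ × ℝ)) = p +ᵥ ({0, q - p, r - p} : Set (ℝ × ℝ)) := by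
    simp [Set.vadd_set_insert]
  rw [htranslate, convexHull_vadd, measure_vadd, volume_convexHull_zero_triple]
  rfl

lemma volume_preimage_swap (s : Set (ℝ × ℝ)) : volume (Prod.swap ⁻¹' s) = volume s :=
  (Measure.measurePreserving_swap (μ := volume) (ν := volume)).measure_preimage_equiv
    (f := MeasurableEquiv.prodComm) s

lemma preimage_swap_convexHull (s : Set (ℝ × ℝ)) :
    Prod.swap ⁻¹' convexHull ℝ s = convexHull ℝ (Prod.swap ⁻¹' s) := by
  rw [← Set.image_swap_eq_preimage_swap]
  exact (LinearEquiv.prodComm ℝ ℝ ℝ).toLinearMap.image_convexHull s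

lemma ncard_le_abs_sub_add_one {S : Set ℤ} {a b : ℝ} (h : ∀ t ∈ S, (t : ℝ) ∈ Set.uIcc a b) :
    (S.ncard : ℝ) ≤ |b - a| + 1 := by
  have hsub : S ⊆ Finset.Icc ⌈min a b⌉ ⌊max a b⌋ := fun t ht => by
    obtain ⟨h1, h2⟩ := h t ht
    simp [Int.ceil_le, Int.le_floor, h1, h2]
  have hcard : (S.ncard : ℤ) ≤ max (⌊max a b⌋ + 1 - ⌈min a b⌉) 0 := by
    rw [← Int.toNat_eq_max, ← Int.card_Icc]
    exact_mod_cast (Set.ncard_le_ncard hsub (Finset.finite_toSet _)).trans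
      (Set.ncard_coe_finset _).le
  have hcard' : (S.ncard : ℝ) ≤ max ((⌊max a b⌋ : ℝ) + 1 - ⌈min a b⌉) 0 := by
    exact_mod_cast hcard
  refine hcard'.trans (max_le ?_ (by positivity))
  linarith [Int.floor_le (max a b), Int.le_ceil (min a b), max_sub_min_eq_abs a b]

lemma latLenX_convexHull_eq_zero {s : Set (ℝ × ℝ)} (hs : ∀ v ∈ s, 0 ≤ v.2)
    (h : (s ∩ {v | v.2 = 0}).Subsingleton) : latLenX (convexHull ℝ s) = 0 := by
  have hT : (convexHull ℝ s ∩ {v | v.2 = 0}).Subsingleton :=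
    ((Set.Subsingleton.convex (𝕜 := ℝ) h).convexHull_eq ▸ h).anti
      (convexHull_inter_subset_of_nonneg (LinearMap.snd ℝ ℝ ℝ) hs)
  have hZ : {t : ℤ | ((t : ℝ), (0 : ℝ)) ∈ convexHull ℝ s}.Subsingleton := fun a ha b hb => by
    simpa using hT ⟨ha, rfl⟩ ⟨hb, rfl⟩
  simp [latLenX, (Set.ncard_le_one_iff hZ.finite).2 fun ha hb => hZ ha hb]

lemma latLenY_convexHull_eq_zero {s : Set (ℝ × ℝ)} (hs : ∀ v ∈ s, 0 ≤ v.1)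
    (h : (s ∩ {v | v.1 = 0}).Subsingleton) : latLenY (convexHull ℝ s) = 0 := by
  have hT : (convexHull ℝ s ∩ {v | v.1 = 0}).Subsingleton :=
    ((Set.Subsingleton.convex (𝕜 := ℝ) h).convexHull_eq ▸ h).anti
      (convexHull_inter_subset_of_nonneg (LinearMap.fst ℝ ℝ ℝ) hs)
  have hZ : {t : ℤ | ((0 : ℝ), (t : ℝ)) ∈ convexHull ℝ s}.Subsingleton := fun a ha b hb => by
    simpa using hT ⟨ha, rfl⟩ ⟨hb, rfl⟩
  simp [latLenY, (Set.ncard_le_one_iff hZ.finite).2 fun ha hb => hZ ha hb]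

lemma latLenX_convexHull_le_of_snd_eq_zero {p q r : ℝ × ℝ} (hp : p.2 = 0) (hq : q.2 = 0)
    (hr : 1 ≤ r.2) :
    (latLenX (convexHull ℝ {p, q, r}) : ℝ) ≤ 2 * (volume (convexHull ℝ {p, q, r})).toReal := by
  have hnonneg : ∀ v ∈ ({p, q, r} : Set (ℝ × ℝ)), 0 ≤ v.2 := by
    rintro v (rfl | rfl | rfl) <;> linarith
  have hbase : {p, q, r} ∩ {v : ℝ × ℝ | v.2 = 0} ⊆ {p, q} := by
    rintro v ⟨rfl | rfl | rfl, hv⟩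
    · simp
    · simp
    · exact absurd (hv.symm ▸ hr : (1 : ℝ) ≤ 0) (by norm_num)
  have hmem : ∀ t ∈ {t : ℤ | ((t : ℝ), (0 : ℝ)) ∈ convexHull ℝ {p, q, r}},
      (t : ℝ) ∈ Set.uIcc p.1 q.1 := fun t ht => by
    have hseg : ((t : ℝ), (0 : ℝ)) ∈ segment ℝ p q :=
      convexHull_pair (𝕜 := ℝ) p q ▸ convexHull_mono hbase
        (convexHull_inter_subset_of_nonneg (LinearMap.snd ℝ ℝ ℝ) hnonneg ⟨ht, rfl⟩)
    simpa [segment_eq_uIcc] using (Prod.segment_subset p q hseg).1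
  have hlen : (latLenX (convexHull ℝ {p, q, r}) : ℝ) ≤ |q.1 - p.1| := by
    have hcount := ncard_le_abs_sub_add_one hmem
    unfold latLenX
    generalize Set.ncard {t : ℤ | ((t : ℝ), (0 : ℝ)) ∈ convexHull ℝ {p, q, r}} = n at hcount ⊢
    rcases n with _ | n
    · simp
    · push_cast at hcount ⊢
      linarith
  rw [volume_convexHull_triple, ENNReal.toReal_ofReal (by positivity), hp, hq]
  calc (latLenX (convexHull ℝ {p, q, r}) : ℝ) ≤ |q.1 - p.1| * r.2 :=
        hlen.trans (le_mul_of_one_le_right (abs_nonneg _) hr)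
    _ = 2 * (|(q.1 - p.1) * (r.2 - 0) - (0 - 0) * (r.1 - p.1)| / 2) := by
        rw [sub_self, zero_mul, sub_zero, sub_zero, abs_mul, abs_of_pos (by linarith : 0 < r.2)]
        ring

lemma latLenX_convexHull_le {p q r : ℝ × ℝ}
    (hlattice : ∀ v ∈ ({p, q, r} : Set (ℝ × ℝ)), ∃ n : ℕ, v.2 = n)
    (hflat : ¬ {p, q, r} ⊆ {v : ℝ × ℝ | v.2 = 0}) :
    (latLenX (convexHull ℝ {p, q, r}) : ℝ) ≤ 2 * (volume (convexHull ℝ {p, q, r})).toReal := by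
  have hnonneg : ∀ v ∈ ({p, q, r} : Set (ℝ × ℝ)), 0 ≤ v.2 := fun v hv => by
    obtain ⟨n, hn⟩ := hlattice v hv
    exact hn ▸ n.cast_nonneg
  by_cases hsub : ({p, q, r} ∩ {v : ℝ × ℝ | v.2 = 0}).Subsingleton
  · rw [latLenX_convexHull_eq_zero hnonneg hsub, Nat.cast_zero]
    positivity
  obtain ⟨u, ⟨hu, hu0⟩, v, ⟨hv, hv0⟩, huv⟩ := Set.not_subsingleton_iff.1 hsub
  obtain ⟨w, hw⟩ := exists_triple_eq_of_mem_of_mem hu hv huv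
  rw [hw] at hlattice hflat ⊢
  obtain ⟨n, hn⟩ := hlattice w (by simp)
  have hn0 : n ≠ 0 := by
    rintro rfl
    exact hflat (by rintro x (rfl | rfl | rfl) <;> simp_all)
  exact latLenX_convexHull_le_of_snd_eq_zero hu0 hv0
    (hn ▸ Nat.one_le_cast.2 (Nat.pos_of_ne_zero hn0))

lemma latLenY_convexHull_le {p q r : ℝ × ℝ}
    (hlattice : ∀ v ∈ ({p, q, r} : Set (ℝ × ℝ)), ∃ n : ℕ, v.1 = n)
    (hflat : ¬ {p, q, r} ⊆ {v : ℝ × ℝ | v.1 = 0}) :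
    (latLenY (convexHull ℝ {p, q, r}) : ℝ) ≤ 2 * (volume (convexHull ℝ {p, q, r})).toReal := by
  have hswap : Prod.swap ⁻¹' ({p, q, r} : Set (ℝ × ℝ)) = {p.swap, q.swap, r.swap} := by
    ext x; simp [Prod.swap_eq_iff_eq_swap]
  have key := latLenX_convexHull_le (p := p.swap) (q := q.swap) (r := r.swap)
    (by rintro v (rfl | rfl | rfl) <;> exact hlattice _ (by simp))
    (fun h => hflat fun v hv => show v.swap ∈ {v : ℝ × ℝ | v.2 = 0} from
      h (by rcases hv with rfl | rfl | rfl <;> simp))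
  rwa [← hswap, ← preimage_swap_convexHull, volume_preimage_swap] at key

lemma exists_natCast_eq_of_intCast_nonneg {z : ℤ} (h : 0 ≤ (z : ℝ)) : ∃ n : ℕ, (z : ℝ) = n :=
  ⟨z.toNat, by rw [← Int.cast_natCast, Int.toNat_of_nonneg (Int.cast_nonneg_iff.1 h)]⟩

theorem stmt0_general (P Q R : ℤ × ℤ) (p q r : ℝ × ℝ)
    (hp : p = ((P.1 : ℝ), (P.2 : ℝ))) (hq : q = ((Q.1 : ℝ), (Q.2 : ℝ)))
    (hr : r = ((R.1 : ℝ), (R.2 : ℝ)))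
    (hncol : ¬ Collinear ℝ ({p, q, r} : Set (ℝ × ℝ)))
    (T : Set (ℝ × ℝ)) (hT : T = convexHull ℝ {p, q, r})
    (hpos : T ⊆ {v | 0 ≤ v.1 ∧ 0 ≤ v.2})
    (hax : ¬ ((segment ℝ p q ⊆ {v : ℝ × ℝ | v.2 = 0} ∨
               segment ℝ q r ⊆ {v : ℝ × ℝ | v.2 = 0} ∨
               segment ℝ r p ⊆ {v : ℝ × ℝ | v.2 = 0}) ∧
              (segment ℝ p q ⊆ {v : ℝ × ℝ | v.1 = 0} ∨
               segment ℝ q r ⊆ {v : ℝ × ℝ | v.1 = 0} ∨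
               segment ℝ r p ⊆ {v : ℝ × ℝ | v.1 = 0}))) :
    0 ≤ 2 * (volume T).toReal - (latLenX T : ℝ) - (latLenY T : ℝ) := by
  subst hT
  have hvert : ∀ v ∈ ({p, q, r} : Set (ℝ × ℝ)), 0 ≤ v.1 ∧ 0 ≤ v.2 :=
    fun v hv => hpos (subset_convexHull ℝ _ hv)
  have hlattice : ∀ v ∈ ({p, q, r} : Set (ℝ × ℝ)), (∃ n : ℕ, v.1 = n) ∧ ∃ n : ℕ, v.2 = n := by
    intro v hv
    obtain ⟨z, rfl⟩ : ∃ z : ℤ × ℤ, v = ((z.1 : ℝ), (z.2 : ℝ)) := by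
      rcases hv with rfl | rfl | rfl
      exacts [⟨P, hp⟩, ⟨Q, hq⟩, ⟨R, hr⟩]
    obtain ⟨h1, h2⟩ := hvert _ hv
    exact ⟨exists_natCast_eq_of_intCast_nonneg h1, exists_natCast_eq_of_intCast_nonneg h2⟩
  have hX := latLenX_convexHull_le (fun v hv => (hlattice v hv).2)
    (hncol ∘ collinear_of_subset_setOf_snd_eq_zero)
  have hY := latLenY_convexHull_le (fun v hv => (hlattice v hv).1)
    (hncol ∘ collinear_of_subset_setOf_fst_eq_zero)
  by_cases hsubX : ({p, q, r} ∩ {v : ℝ × ℝ | v.2 = 0}).Subsingleton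
  · rw [latLenX_convexHull_eq_zero (fun v hv => (hvert v hv).2) hsubX, Nat.cast_zero]
    linarith
  have hsubY : ({p, q, r} ∩ {v : ℝ × ℝ | v.1 = 0}).Subsingleton := by
    by_contra hsubY
    exact hax ⟨exists_segment_subset_of_not_subsingleton
        (convex_hyperplane (LinearMap.snd ℝ ℝ ℝ).isLinear 0) hsubX,
      exists_segment_subset_of_not_subsingleton
        (convex_hyperplane (LinearMap.fst ℝ ℝ ℝ).isLinear 0) hsubY⟩
  rw [latLenY_convexHull_eq_zero (fun v hv => (hvert v hv).1) hsubY, Nat.cast_zero]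
  linarith

/-- a lattice triangle `T ⊆ ℝ²_{≥0}` not containing the origin,
with not both a side on the x-axis and a side on the y-axis, has
`2·Area(T) − ℓ_x(T) − ℓ_y(T) ≥ 0`. -/
theorem stmt0 (P Q R : ℤ × ℤ) (p q r : ℝ × ℝ)
    (hp : p = ((P.1 : ℝ), (P.2 : ℝ))) (hq : q = ((Q.1 : ℝ), (Q.2 : ℝ)))
    (hr : r = ((R.1 : ℝ), (R.2 : ℝ)))
    (hncol : ¬ Collinear ℝ ({p, q, r} : Set (ℝ × ℝ)))
    (T : Set (ℝ × ℝ)) (hT : T = convexHull ℝ {p, q, r})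
    (hpos : T ⊆ {v | 0 ≤ v.1 ∧ 0 ≤ v.2})
    (h0 : ((0 : ℝ), (0 : ℝ)) ∉ T)
    (hax : ¬ ((segment ℝ p q ⊆ {v : ℝ × ℝ | v.2 = 0} ∨
               segment ℝ q r ⊆ {v : ℝ × ℝ | v.2 = 0} ∨
               segment ℝ r p ⊆ {v : ℝ × ℝ | v.2 = 0}) ∧
              (segment ℝ p q ⊆ {v : ℝ × ℝ | v.1 = 0} ∨
               segment ℝ q r ⊆ {v : ℝ × ℝ | v.1 = 0} ∨
               segment ℝ r p ⊆ {v : ℝ × ℝ | v.1 = 0}))) :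
    0 ≤ 2 * (volume T).toReal - (latLenX T : ℝ) - (latLenY T : ℝ) :=
  stmt0_general P Q R p q r hp hq hr hncol T hT hpos hax
end

section
/- Let A = (0,0,1,0), B = (0,0,3,0), C = (2,1,1,0), D = (1,2,1,0), E = (1,1,1,1) be points of ℤ⁴_{≥0} and let Σ = Conv(A,B,C,D,E) be the 4-dimensional simplex they span. Then the contribution of Σ to the Kouchnirenko alternating sum, namely 4!·Vol₄(Σ) − 3!·Vol₃(Σ ∩ {t = 0}) − 2!·Vol₂(Σ ∩ {x = y = 0}) (where (x,y,z,t) are the coordinates and only the faces of Σ lying in coordinate subspaces contribute), is negative; explicitly it equals 6 − 6 − 2 = −2. -/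
/-!
The simplex `Σ` is the image of the corner simplex `{s | 0 ≤ s, ∑ sᵢ ≤ 1}` of `ℝ⁴` under
`s ↦ A + M s`, where the columns of `M` are the edges `B - A, C - A, D - A, E - A`;
hence `Vol₄ Σ = |det M| / 4! = 6 / 4!`. The vertex `E` is the only one off `{t = 0}` and its
edge has `t`-coordinate `1`, so `Σ ∩ {t = 0}` is the facet `ABCD`, again an affine image of a
corner simplex, of `3`-volume `6 / 3!`; and `Σ ∩ {x = y = 0}` is the edge `AB`, the segment
`z ∈ [1, 3]`. The corner simplex of `ℝⁿ⁺¹` has volume `1 / (n + 1)!` by slicing along the first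
coordinate: the slice at height `t ∈ [0, 1)` is the corner simplex of `ℝⁿ` scaled by `1 - t`,
and `∫₀¹ (1 - t)ⁿ dt = 1 / (n + 1)`.
-/

open MeasureTheory Set Pointwise Matrix
open scoped Nat

def cornerSimplex (n : ℕ) : Set (Fin n → ℝ) := {x | (∀ i, 0 ≤ x i) ∧ ∑ i, x i ≤ 1}

lemma cornerSimplex_eq_Ici_inter (n : ℕ) :
    cornerSimplex n = Ici 0 ∩ {x | ∑ i, x i ≤ 1} := by
  ext
  simp [cornerSimplex, Pi.le_def]

lemma isClosed_cornerSimplex (n : ℕ) : IsClosed (cornerSimplex n) := by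
  rw [cornerSimplex_eq_Ici_inter]
  exact isClosed_Ici.inter
    (isClosed_le (continuous_finsetSum _ fun i _ => continuous_apply i) continuous_const)

lemma convex_cornerSimplex (n : ℕ) : Convex ℝ (cornerSimplex n) := by
  rw [cornerSimplex_eq_Ici_inter]
  refine (convex_Ici 0).inter (convex_halfSpace_le ⟨fun x y => ?_, fun c x => ?_⟩ 1)
  · simp [Finset.sum_add_distrib]
  · simp [Finset.mul_sum]

lemma preimage_smul_cornerSimplex (n : ℕ) {r : ℝ} (hr : 0 < r) :
    (r⁻¹ • ·) ⁻¹' cornerSimplex n = {x | (∀ i, 0 ≤ x i) ∧ ∑ i, x i ≤ r} := by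
  ext x
  simp [cornerSimplex, ← Finset.mul_sum, inv_mul_le_iff₀ hr, hr]

lemma cons_mem_cornerSimplex {n : ℕ} (t : ℝ) (y : Fin n → ℝ) :
    (Fin.cons t y : Fin (n + 1) → ℝ) ∈ cornerSimplex (n + 1) ↔
      0 ≤ t ∧ (∀ i, 0 ≤ y i) ∧ ∑ i, y i ≤ 1 - t := by
  simp [cornerSimplex, Fin.forall_fin_succ, Fin.sum_univ_succ, le_sub_iff_add_le', and_assoc]

-- At `t = 1` the slice is `{0}`, which is not null when `n = 0`.
lemma volume_cons_mem_cornerSimplex {n : ℕ} {t : ℝ} (ht : t ≠ 1) :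
    volume {y : Fin n → ℝ | Fin.cons t y ∈ cornerSimplex (n + 1)} =
      (Ico 0 1).indicator
        (fun t => ENNReal.ofReal ((1 - t) ^ n) * volume (cornerSimplex n)) t := by
  simp only [cons_mem_cornerSimplex]
  by_cases hmem : t ∈ Ico 0 1
  · have hpos : 0 < 1 - t := sub_pos.2 hmem.2
    simp only [hmem.1, true_and]
    rw [indicator_of_mem hmem, ← preimage_smul_cornerSimplex n hpos,
      Measure.addHaar_preimage_smul _ (inv_ne_zero hpos.ne'), inv_pow, inv_inv,
      abs_of_nonneg (by positivity), Module.finrank_fin_fun]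
  · rw [indicator_of_notMem hmem]
    convert measure_empty (μ := volume)
    refine eq_empty_of_forall_notMem fun y ⟨h0, hy, hsum⟩ => hmem ⟨h0, ?_⟩
    have := Finset.sum_nonneg fun i (_ : i ∈ Finset.univ) => hy i
    exact lt_of_le_of_ne (by linarith) ht

lemma lintegral_Ico_one_sub_pow (n : ℕ) :
    ∫⁻ t in Ico (0 : ℝ) 1, ENNReal.ofReal ((1 - t) ^ n) = ENNReal.ofReal (1 / (n + 1)) := by
  have hcont : Continuous fun t : ℝ => (1 - t) ^ n := by fun_prop
  rw [setLIntegral_congr Ico_ae_eq_Ioc, ← ofReal_integral_eq_lintegral_ofReal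
    (hcont.integrableOn_Icc.mono_set Ioc_subset_Icc_self)
    ((ae_restrict_iff' measurableSet_Ioc).2 (ae_of_all _ fun t ht =>
      pow_nonneg (sub_nonneg.2 ht.2) n)),
    ← intervalIntegral.integral_of_le zero_le_one,
    intervalIntegral.integral_comp_sub_left (fun s => s ^ n)]
  norm_num [integral_pow]

lemma volume_cornerSimplex (n : ℕ) : volume (cornerSimplex n) = ENNReal.ofReal (1 / n !) := by
  induction n with
  | zero => simp [cornerSimplex, volume_pi]
  | succ n ih =>
    let e := MeasurableEquiv.piFinSuccAbove (fun _ : Fin (n + 1) => ℝ) 0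
    have hmeas : MeasurableSet (e.symm ⁻¹' cornerSimplex (n + 1)) :=
      (isClosed_cornerSimplex _).measurableSet.preimage e.symm.measurable
    have hslices : (fun t => volume (Prod.mk t ⁻¹' (e.symm ⁻¹' cornerSimplex (n + 1))))
        =ᵐ[volume] (Ico 0 1).indicator
          (fun t => ENNReal.ofReal ((1 - t) ^ n) * volume (cornerSimplex n)) := by
      filter_upwards [compl_mem_ae_iff.2 (measure_singleton (1 : ℝ))] with t ht
      rw [← volume_cons_mem_cornerSimplex ht]
      congr 1
      ext y
      simp [e, MeasurableEquiv.piFinSuccAbove, Fin.insertNthEquiv]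
    rw [← ((volume_preserving_piFinSuccAbove (fun _ => ℝ) 0).symm).measure_preimage
        (isClosed_cornerSimplex _).measurableSet.nullMeasurableSet,
      Measure.volume_eq_prod, Measure.prod_apply hmeas,
      lintegral_congr_ae hslices, lintegral_indicator measurableSet_Ico,
      lintegral_mul_const _ (by fun_prop), lintegral_Ico_one_sub_pow, ih,
      ← ENNReal.ofReal_mul (by positivity), Nat.factorial_succ]
    push_cast
    field_simp

lemma convexHull_zero_single_eq_cornerSimplex (n : ℕ) :
    convexHull ℝ (insert 0 (range fun i : Fin n => Pi.single i 1)) = cornerSimplex n := by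
  refine Subset.antisymm (convexHull_min ?_ (convex_cornerSimplex n)) fun x ⟨hx, hsum⟩ => ?_
  · rintro _ (rfl | ⟨i, rfl⟩)
    · simp [cornerSimplex]
    · refine ⟨fun j => ?_, by simp⟩
      rcases eq_or_ne j i with rfl | h <;> simp [*]
  · have hmem := (convex_convexHull ℝ
        (insert 0 (range fun i : Fin n => Pi.single i (1 : ℝ)))).sum_mem (t := Finset.univ)
      (w := Fin.cons (1 - ∑ i, x i) x) (z := Fin.cons 0 fun i => Pi.single i 1) ?_ ?_ ?_
    · simpa [Fin.sum_univ_succ, ← pi_eq_sum_univ'] using hmem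
    · simp [Fin.forall_fin_succ, hsum, hx]
    · simp [Fin.sum_univ_succ]
    · simp only [Finset.mem_univ, forall_const, Fin.forall_fin_succ, Fin.cons_zero, Fin.cons_succ]
      exact ⟨subset_convexHull ℝ _ (mem_insert _ _),
        fun i => subset_convexHull ℝ _ (mem_insert_of_mem _ (mem_range_self i))⟩

section AffineCorner

variable {n : ℕ} (a : Fin n → ℝ) (M : Matrix (Fin n) (Fin n) ℝ)

def affineCorner : Set (Fin n → ℝ) := (fun s => a + M *ᵥ s) '' cornerSimplex n

lemma image_add_mulVec_eq_vadd_image (P : Set (Fin n → ℝ)) :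
    (fun s => a + M *ᵥ s) '' P = a +ᵥ toLin' M '' P := by
  rw [← image_vadd, image_image]
  rfl

lemma volume_affineCorner : volume (affineCorner a M) = ENNReal.ofReal (|M.det| / n !) := by
  rw [affineCorner, image_add_mulVec_eq_vadd_image, measure_vadd,
    Measure.addHaar_image_linearMap, LinearMap.det_toLin', volume_cornerSimplex,
    ← ENNReal.ofReal_mul (abs_nonneg _), mul_one_div]

lemma affineCorner_eq_convexHull :
    affineCorner a M = convexHull ℝ (insert a (range fun i => a + M.col i)) := by
  rw [affineCorner, ← convexHull_zero_single_eq_cornerSimplex, image_add_mulVec_eq_vadd_image,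
    LinearMap.image_convexHull, ← convexHull_vadd, ← image_add_mulVec_eq_vadd_image,
    image_insert_eq, ← range_comp]
  simp [Function.comp_def]

end AffineCorner

/-- The columns are `B - A, C - A, D - A, E - A` for `A = (0, 0, 1, 0)`. -/
def sigmaEdges : Matrix (Fin 4) (Fin 4) ℝ := !![0, 2, 1, 1; 0, 1, 2, 1; 2, 0, 0, 0; 0, 0, 0, 1]

/-- The edges `B - A, C - A, D - A` with their (zero) `t`-coordinate dropped. -/
def baseEdges : Matrix (Fin 3) (Fin 3) ℝ := !![0, 2, 1; 0, 1, 2; 2, 0, 0]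

lemma det_sigmaEdges : sigmaEdges.det = 6 := by
  simp [sigmaEdges, det_succ_row_zero, Fin.sum_univ_succ, Fin.succAbove]
  norm_num

lemma det_baseEdges : baseEdges.det = 6 := by
  simp [baseEdges, det_fin_three]
  norm_num

lemma add_sigmaEdges_mulVec (s : Fin 4 → ℝ) :
    ![0, 0, 1, 0] + sigmaEdges *ᵥ s =
      ![2 * s 1 + s 2 + s 3, s 1 + 2 * s 2 + s 3, 1 + 2 * s 0, s 3] := by
  ext i
  fin_cases i <;> simp [sigmaEdges, dotProduct, Fin.sum_univ_four]

lemma add_baseEdges_mulVec (s : Fin 3 → ℝ) :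
    ![0, 0, 1] + baseEdges *ᵥ s = ![2 * s 1 + s 2, s 1 + 2 * s 2, 1 + 2 * s 0] := by
  ext i
  fin_cases i <;> simp [baseEdges, dotProduct, Fin.sum_univ_three]

lemma convexHull_eq_affineCorner_sigmaEdges :
    convexHull ℝ ({![0, 0, 1, 0], ![0, 0, 3, 0], ![2, 1, 1, 0], ![1, 2, 1, 0], ![1, 1, 1, 1]} :
      Set (Fin 4 → ℝ)) = affineCorner ![0, 0, 1, 0] sigmaEdges := by
  have hcols : (fun i => ![0, 0, 1, 0] + sigmaEdges.col i) =
      ![![0, 0, 3, 0], ![2, 1, 1, 0], ![1, 2, 1, 0], ![1, 1, 1, 1]] := by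
    ext i j
    fin_cases i <;> fin_cases j <;> norm_num [sigmaEdges]
  rw [affineCorner_eq_convexHull, hcols]
  simp only [range_cons, range_empty, union_empty, singleton_union]

lemma affineCorner_sigmaEdges_slice_t_zero :
    {p : Fin 3 → ℝ | ![p 0, p 1, p 2, 0] ∈ affineCorner ![0, 0, 1, 0] sigmaEdges} =
      affineCorner ![0, 0, 1] baseEdges := by
  ext p
  simp only [affineCorner, cornerSimplex, mem_ofPred_eq, mem_image, add_sigmaEdges_mulVec,
    add_baseEdges_mulVec, vecCons_inj, Fin.sum_univ_four, Fin.sum_univ_three]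
  constructor
  · rintro ⟨s, ⟨hs, hsum⟩, hp0, hp1, hp2, hs3, -⟩
    refine ⟨![s 0, s 1, s 2], ⟨fun i => by fin_cases i <;> simp [hs], ?_⟩, ?_⟩
    · simpa [hs3] using hsum
    · ext i
      fin_cases i <;> simp [← hp0, ← hp1, ← hp2, hs3]
  · rintro ⟨s, ⟨hs, hsum⟩, rfl⟩
    exact ⟨![s 0, s 1, s 2, 0], ⟨fun i => by fin_cases i <;> simp [hs], by simpa using hsum⟩,
      by simp⟩

lemma affineCorner_sigmaEdges_slice_xy_zero :
    {z : ℝ | ![0, 0, z, 0] ∈ affineCorner ![0, 0, 1, 0] sigmaEdges} = Icc 1 3 := by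
  ext z
  simp only [affineCorner, cornerSimplex, mem_ofPred_eq, mem_image, add_sigmaEdges_mulVec,
    vecCons_inj, Fin.sum_univ_four]
  constructor
  · rintro ⟨s, ⟨hs, hsum⟩, -, -, rfl, -⟩
    constructor <;> linarith [hs 0, hs 1, hs 2, hs 3]
  · rintro ⟨hz1, hz3⟩
    refine ⟨![(z - 1) / 2, 0, 0, 0], ⟨fun i => ?_, ?_⟩, ?_⟩
    · fin_cases i <;> simp
      linarith
    · simp only [cons_val]
      linarith
    · simp only [cons_val]
      norm_num
      ring

/-- the simplex `Σ = Conv(A,B,C,D,E)` in `ℝ⁴` with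
`A=(0,0,1,0), B=(0,0,3,0), C=(2,1,1,0), D=(1,2,1,0), E=(1,1,1,1)` contributes
`4!·Vol₄(Σ) − 3!·Vol₃(Σ∩{t=0}) − Vol₁(Σ∩{x=y=0}) = 6 − 6 − 2 = −2 < 0`
to the Kouchnirenko alternating sum. -/
theorem stmt1 :
    ∀ S : Set (Fin 4 → ℝ),
      S = convexHull ℝ
          ({![0,0,1,0], ![0,0,3,0], ![2,1,1,0], ![1,2,1,0], ![1,1,1,1]} :
            Set (Fin 4 → ℝ)) →
      ∀ T3 : Set (Fin 3 → ℝ), T3 = {p | (![p 0, p 1, p 2, 0] : Fin 4 → ℝ) ∈ S} →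
      ∀ Sg : Set ℝ, Sg = {z | (![0, 0, z, 0] : Fin 4 → ℝ) ∈ S} →
        ((Nat.factorial 4 : ℝ) * (volume S).toReal = 6 ∧
         (Nat.factorial 3 : ℝ) * (volume T3).toReal = 6 ∧
         (volume Sg).toReal = 2) ∧
        (Nat.factorial 4 : ℝ) * (volume S).toReal -
            (Nat.factorial 3 : ℝ) * (volume T3).toReal - (volume Sg).toReal
          = 6 - 6 - 2 ∧
        (Nat.factorial 4 : ℝ) * (volume S).toReal -
            (Nat.factorial 3 : ℝ) * (volume T3).toReal - (volume Sg).toReal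
          < 0 := by
  rintro S rfl T3 rfl Sg rfl
  rw [convexHull_eq_affineCorner_sigmaEdges, affineCorner_sigmaEdges_slice_t_zero,
    affineCorner_sigmaEdges_slice_xy_zero, volume_affineCorner, volume_affineCorner,
    det_sigmaEdges, det_baseEdges, Real.volume_Icc]
  norm_num [Nat.factorial]
end

section
/- Let 𝔸 ⊂ ℤⁿ_{≥0} be a finite set not contained in any coordinate hyperplane Eᵢ = {xᵢ = 0}, and for each i let Δᵢ = Conv(𝔸 ∖ Eᵢ). Then Δ₁, …, Δₙ are semi-interlaced in the pair (Conv(𝔸), 𝔸), and the sutures of (Conv(𝔸), 𝔸) are exactly those faces K of Conv(𝔸) for which there exists a coordinate subspace E with K ⊆ E and dim E = dim K. -/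
open MeasureTheory Pointwise

/-- Support face of `P` in direction `γ`. -/
def suppFace {n : ℕ} (γ : Fin n → ℝ) (P : Set (Fin n → ℝ)) : Set (Fin n → ℝ) :=
  {x | x ∈ P ∧ ∀ y ∈ P, ∑ j, γ j * x j ≤ ∑ j, γ j * y j}

/-- Dimension of a subset of `ℝⁿ` (dimension of its affine hull). -/
noncomputable def sdim {n : ℕ} (s : Set (Fin n → ℝ)) : ℕ :=
  Module.finrank ℝ (affineSpan ℝ s).direction

/-- `K` is a (support) face of `Ap`. -/
def IsFaceOf {n : ℕ} (Ap K : Set (Fin n → ℝ)) : Prop :=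
  ∃ γ : Fin n → ℝ, K = suppFace γ Ap

/-- The set of thrown out faces: maximal faces of `Ap` disjoint from `Dp`. -/
def thrownOut {n : ℕ} (Ap Dp : Set (Fin n → ℝ)) : Set (Set (Fin n → ℝ)) :=
  {K | IsFaceOf Ap K ∧ Disjoint K Dp ∧
    ∀ K', IsFaceOf Ap K' → Disjoint K' Dp → K ⊆ K' → K = K'}

/-- `Dp` is a daughter sub-polytope of the pair `(Conv A, A)`. -/
def IsDaughter {n : ℕ} (A : Set (Fin n → ℝ)) (Dp : Set (Fin n → ℝ)) : Prop :=
  (∀ K ∈ thrownOut (convexHull ℝ A) Dp, ∀ K' ∈ thrownOut (convexHull ℝ A) Dp,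
      K ≠ K' → Disjoint K K') ∧
  Dp = convexHull ℝ (A \ ⋃₀ thrownOut (convexHull ℝ A) Dp)

/-- `Dp 1, …, Dp n` are semi-interlaced in the pair `(Conv A, A)`. -/
def SemiInterlaced {n : ℕ} (A : Set (Fin n → ℝ)) (Dp : Fin n → Set (Fin n → ℝ)) : Prop :=
  (∀ i, IsDaughter A (Dp i)) ∧
  ∀ γ : Fin n → ℝ, γ ≠ 0 →
    sdim (suppFace γ (convexHull ℝ A)) ≤
      Set.ncard {i | suppFace γ (Dp i) ⊆ suppFace γ (convexHull ℝ A)}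

/-- `S` is a suture of `(Conv A, A)` for the semi-interlaced family `Dp`. -/
def IsSuture {n : ℕ} (A : Set (Fin n → ℝ)) (Dp : Fin n → Set (Fin n → ℝ))
    (S : Set (Fin n → ℝ)) : Prop :=
  ∃ γ : Fin n → ℝ, γ ≠ 0 ∧ S = suppFace γ (convexHull ℝ A) ∧
    Set.ncard {i | suppFace γ (Dp i) ⊆ S} = sdim S

/-! ### Auxiliary material -/

/-- The linear functional `x ↦ ∑ j, γ j * x j`. -/
noncomputable def lf {n : ℕ} (γ : Fin n → ℝ) : (Fin n → ℝ) →ₗ[ℝ] ℝ where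
  toFun x := ∑ j, γ j * x j
  map_add' x y := by simp [mul_add, Finset.sum_add_distrib]
  map_smul' c x := by simp [Finset.mul_sum, mul_left_comm]

@[simp] lemma lf_apply {n : ℕ} (γ x : Fin n → ℝ) : lf γ x = ∑ j, γ j * x j := rfl

/-- The set of minimizers of `γ` on `A`. -/
def argA {n : ℕ} (γ : Fin n → ℝ) (A : Set (Fin n → ℝ)) : Set (Fin n → ℝ) :=
  {a ∈ A | ∀ b ∈ A, ∑ j, γ j * a j ≤ ∑ j, γ j * b j}

lemma argA_nonempty {n : ℕ} (γ : Fin n → ℝ) {A : Set (Fin n → ℝ)} (hA : A.Finite)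
    (hne : A.Nonempty) : (argA γ A).Nonempty := by
  obtain ⟨a, ha, hmin⟩ := Finset.exists_min_image hA.toFinset (fun a => ∑ j, γ j * a j)
    (by simpa using hne)
  exact ⟨a, hA.mem_toFinset.mp ha, fun b hb => hmin b (hA.mem_toFinset.mpr hb)⟩

lemma convex_suppFace {n : ℕ} (γ : Fin n → ℝ) {P : Set (Fin n → ℝ)} (hP : Convex ℝ P) :
    Convex ℝ (suppFace γ P) := by
  intro x hx y hy a b ha hb hab
  refine ⟨hP hx.1 hy.1 ha hb hab, fun z hz => ?_⟩
  have h1 := hx.2 z hz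
  have h2 := hy.2 z hz
  have : lf γ (a • x + b • y) = a * lf γ x + b * lf γ y := by
    simp [map_add, _root_.map_smul, smul_eq_mul]
  calc ∑ j, γ j * (a • x + b • y) j = a * lf γ x + b * lf γ y := this
    _ ≤ a * lf γ z + b * lf γ z := by
        gcongr <;> simp_all [lf_apply]
    _ = ∑ j, γ j * z j := by rw [← add_mul, hab, one_mul, lf_apply]

/-- Minimizers on `A` minimize over the whole hull. -/
lemma argA_min_hull {n : ℕ} {γ : Fin n → ℝ} {A : Set (Fin n → ℝ)} {a : Fin n → ℝ}
    (ha : a ∈ argA γ A) : ∀ y ∈ convexHull ℝ A, ∑ j, γ j * a j ≤ ∑ j, γ j * y j := by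
  intro y hy
  have : convexHull ℝ A ⊆ {w | lf γ a ≤ lf γ w} := by
    apply convexHull_min
    · intro b hb; exact ha.2 b hb
    · exact convex_halfSpace_ge (lf γ).isLinear _
  exact this hy

lemma argA_mem_suppFace {n : ℕ} {γ : Fin n → ℝ} {A : Set (Fin n → ℝ)} {a : Fin n → ℝ}
    (ha : a ∈ argA γ A) : a ∈ suppFace γ (convexHull ℝ A) :=
  ⟨subset_convexHull ℝ A ha.1, argA_min_hull ha⟩

/-- Key structural lemma: the support face of the hull of a finite set is the hull of
the set of minimizers. -/
lemma suppFace_hull {n : ℕ} (γ : Fin n → ℝ) {A : Set (Fin n → ℝ)} (hA : A.Finite) :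
    suppFace γ (convexHull ℝ A) = convexHull ℝ (argA γ A) := by
  apply Set.Subset.antisymm
  · intro x hx
    obtain ⟨hxP, hxm⟩ := hx
    rw [hA.convexHull_eq] at hxP
    obtain ⟨w, hw0, hw1, hwx⟩ := hxP
    set t := hA.toFinset with ht
    have hmemA : ∀ a ∈ t, a ∈ A := fun a ha => hA.mem_toFinset.mp ha
    have hxval : lf γ x = ∑ a ∈ t, w a * lf γ a := by
      rw [← hwx, Finset.centerMass_eq_of_sum_1 _ _ hw1, map_sum]
      simp [smul_eq_mul]
    have hle : ∀ a ∈ t, lf γ x ≤ lf γ a := by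
      intro a ha
      exact hxm a (subset_convexHull ℝ A (hmemA a ha))
    have hsum0 : ∑ a ∈ t, w a * (lf γ a - lf γ x) = 0 := by
      have : ∑ a ∈ t, w a * (lf γ a - lf γ x)
          = (∑ a ∈ t, w a * lf γ a) - (∑ a ∈ t, w a) * lf γ x := by
        rw [Finset.sum_mul, ← Finset.sum_sub_distrib]
        congr 1 with a
        ring
      rw [this, ← hxval, hw1, one_mul, sub_self]
    have hzero := (Finset.sum_eq_zero_iff_of_nonneg
      (fun a ha => mul_nonneg (hw0 a (hmemA a ha)) (by linarith [hle a ha]))).mp hsum0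
    rw [← hwx, ← Finset.centerMass_filter_ne_zero]
    apply Finset.centerMass_mem_convexHull
    · intro a ha; exact hw0 a (hmemA a (Finset.mem_filter.mp ha).1)
    · rw [Finset.sum_filter_ne_zero, hw1]; norm_num
    · intro a ha
      obtain ⟨hat, hwa⟩ := Finset.mem_filter.mp ha
      have heq : lf γ a = lf γ x := by
        have := hzero a hat
        rcases mul_eq_zero.mp this with h | h
        · exact absurd h hwa
        · linarith [hle a hat]
      refine ⟨hmemA a hat, fun b hb => ?_⟩
      have := hxm b (subset_convexHull ℝ A hb)
      simp only [lf_apply] at heq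
      simp only [id]
      linarith
  · apply convexHull_min
    · intro a ha; exact argA_mem_suppFace ha
    · exact convex_suppFace γ (convex_convexHull ℝ A)

lemma convex_coordSub {n : ℕ} (J : Finset (Fin n)) :
    Convex ℝ {x : Fin n → ℝ | ∀ j ∉ J, x j = 0} := by
  intro x hx y hy a b _ _ _
  intro j hj
  simp [Pi.add_apply, hx j hj, hy j hj]

lemma mem_coord_span {n : ℕ} (J : Finset (Fin n)) (x : Fin n → ℝ)
    (hx : ∀ j ∉ J, x j = 0) :
    x ∈ Submodule.span ℝ (↑(J.image (fun j => Pi.single j (1:ℝ))) : Set (Fin n → ℝ)) := by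
  classical
  have hxsum : x = ∑ j ∈ J, x j • (Pi.single j (1:ℝ) : Fin n → ℝ) := by
    have h1 : ∀ j : Fin n, x j • (Pi.single j (1:ℝ) : Fin n → ℝ) = Pi.single j (x j) := by
      intro j; ext k
      by_cases hk : k = j <;> simp [Pi.single_apply, hk]
    rw [Finset.sum_congr rfl (fun j _ => h1 j)]
    rw [Finset.sum_subset (Finset.subset_univ J)]
    · exact (Finset.univ_sum_single x).symm
    · intro j _ hj
      simp [hx j hj]
  rw [hxsum]
  apply Submodule.sum_mem
  intro j hj
  apply Submodule.smul_mem
  apply Submodule.subset_span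
  exact Finset.mem_coe.mpr (Finset.mem_image_of_mem _ hj)

/-- A set contained in a coordinate subspace with `|J|` coordinates has dimension
at most `|J|`. -/
lemma sdim_le_card {n : ℕ} (J : Finset (Fin n)) {s : Set (Fin n → ℝ)}
    (h : s ⊆ {x | ∀ j ∉ J, x j = 0}) : sdim s ≤ J.card := by
  classical
  set W := Submodule.span ℝ (↑(J.image (fun j => Pi.single j (1:ℝ))) : Set (Fin n → ℝ)) with hW
  have hle : (affineSpan ℝ s).direction ≤ W := by
    rw [direction_affineSpan, vectorSpan_def]
    rw [Submodule.span_le]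
    rintro v ⟨x, hx, y, hy, rfl⟩
    exact W.sub_mem (mem_coord_span J x (h hx)) (mem_coord_span J y (h hy))
  calc sdim s ≤ Module.finrank ℝ W := Submodule.finrank_mono hle
    _ ≤ (J.image (fun j => Pi.single j (1:ℝ))).card := finrank_span_finset_le_card _
    _ ≤ J.card := Finset.card_image_le

/-- for a finite lattice set `𝔸 ⊂ ℤⁿ_{≥0}` not contained in any
coordinate hyperplane, the polytopes `Δᵢ = Conv(𝔸 ∖ {xᵢ = 0})` are
semi-interlaced in `(Conv 𝔸, 𝔸)`, and the sutures are exactly the faces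
contained in a coordinate subspace of the same dimension. -/
theorem stmt6 (n : ℕ) (A : Set (Fin n → ℝ)) (hfin : A.Finite)
    (hlat : ∀ a ∈ A, ∀ j, ∃ z : ℤ, a j = (z : ℝ))
    (hnn : ∀ a ∈ A, ∀ j, 0 ≤ a j)
    (hnotin : ∀ i, ∃ a ∈ A, a i ≠ 0)
    (Δ : Fin n → Set (Fin n → ℝ))
    (hΔ : ∀ i, Δ i = convexHull ℝ {a ∈ A | a i ≠ 0}) :
    SemiInterlaced A Δ ∧
    ∀ γ : Fin n → ℝ, γ ≠ 0 →
      (IsSuture A Δ (suppFace γ (convexHull ℝ A)) ↔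
        ∃ J : Finset (Fin n),
          suppFace γ (convexHull ℝ A) ⊆ {x | ∀ j ∉ J, x j = 0} ∧
          J.card = sdim (suppFace γ (convexHull ℝ A))) := by
  classical
  -- basic facts
  have hAi_ne : ∀ i, {a ∈ A | a i ≠ 0}.Nonempty := by
    intro i; obtain ⟨a, ha, hai⟩ := hnotin i; exact ⟨a, ha, hai⟩
  have hAi_fin : ∀ i, {a ∈ A | a i ≠ 0}.Finite := fun i => hfin.subset (fun a ha => ha.1)
  have hone : ∀ a ∈ A, ∀ i, a i ≠ 0 → (1:ℝ) ≤ a i := by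
    intro a ha i hai
    obtain ⟨z, hz⟩ := hlat a ha i
    have h0 : (0:ℝ) ≤ (z:ℝ) := hz ▸ hnn a ha i
    rw [hz] at hai ⊢
    have hz0 : z ≠ 0 := by exact_mod_cast hai
    have h0' : (0:ℤ) ≤ z := by exact_mod_cast h0
    have h1 : (1:ℤ) ≤ z := by omega
    exact_mod_cast h1
  -- every point of Δ i has i-th coordinate ≥ 1
  have hΔge : ∀ i, ∀ x ∈ Δ i, (1:ℝ) ≤ x i := by
    intro i x hx
    rw [hΔ i] at hx
    have hsub : convexHull ℝ {a ∈ A | a i ≠ 0} ⊆ {w : Fin n → ℝ | (1:ℝ) ≤ w i} := by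
      apply convexHull_min
      · intro a ⟨haA, hai⟩; exact hone a haA i hai
      · exact convex_halfSpace_ge (IsLinearMap.mk (fun x y => rfl) (fun c x => rfl)) _
    exact hsub hx
  -- the characterization of which daughter faces land inside the face of the hull
  have hIeq : ∀ γ : Fin n → ℝ, ∀ i,
      (suppFace γ (Δ i) ⊆ suppFace γ (convexHull ℝ A) ↔ ∃ a ∈ argA γ A, a i ≠ 0) := by
    intro γ i
    constructor
    · intro hsubs
      by_contra hno
      push_neg at hno
      -- every minimizer has zero i-th coordinate, so the face lies in {x i = 0}
      have hface0 : suppFace γ (convexHull ℝ A) ⊆ {x : Fin n → ℝ | x i = 0} := by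
        rw [suppFace_hull γ hfin]
        apply convexHull_min
        · intro a ha; exact hno a ha
        · intro x hx y hy a b _ _ _
          show (a • x + b • y) i = 0
          simp only [Set.mem_setOf_eq] at hx hy
          simp [hx, hy]
      obtain ⟨b, hb⟩ := argA_nonempty γ (hAi_fin i) (hAi_ne i)
      have hbmem : b ∈ suppFace γ (Δ i) := by
        rw [hΔ i]
        exact argA_mem_suppFace hb
      have : b i = 0 := hface0 (hsubs hbmem)
      exact hb.1.2 this
    · rintro ⟨a, haA, hai⟩
      rw [hΔ i, suppFace_hull γ (hAi_fin i), suppFace_hull γ hfin]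
      apply convexHull_mono
      intro b hb
      refine ⟨hb.1.1, fun c hc => ?_⟩
      calc ∑ j, γ j * b j ≤ ∑ j, γ j * a j := hb.2 a ⟨haA.1, hai⟩
        _ ≤ ∑ j, γ j * c j := haA.2 c hc
  -- the dimension bound
  have hdim : ∀ γ : Fin n → ℝ,
      sdim (suppFace γ (convexHull ℝ A)) ≤ {i | ∃ a ∈ argA γ A, a i ≠ 0}.ncard := by
    intro γ
    set I : Set (Fin n) := {i | ∃ a ∈ argA γ A, a i ≠ 0} with hI
    have hIfin : I.Finite := Set.toFinite I
    have hsub : suppFace γ (convexHull ℝ A) ⊆ {x : Fin n → ℝ | ∀ j ∉ hIfin.toFinset, x j = 0} := by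
      rw [suppFace_hull γ hfin]
      apply convexHull_min
      · intro a ha j hj
        rw [Set.Finite.mem_toFinset] at hj
        by_contra haj
        exact hj ⟨a, ha, haj⟩
      · exact convex_coordSub _
    calc sdim (suppFace γ (convexHull ℝ A)) ≤ hIfin.toFinset.card := sdim_le_card _ hsub
      _ = I.ncard := (Set.ncard_eq_toFinset_card I hIfin).symm
  -- semi-interlacedness
  have hsemi : SemiInterlaced A Δ := by
    constructor
    · -- daughters
      intro i
      by_cases hz : ∃ a ∈ A, a i = 0
      · -- there are points on the hyperplane; the thrown-out set is exactly {F}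
        obtain ⟨a₀, ha₀, ha₀i⟩ := hz
        set Z : Set (Fin n → ℝ) := {a ∈ A | a i = 0} with hZ
        set F : Set (Fin n → ℝ) := convexHull ℝ Z with hFdef
        have hsingle : ∀ a : Fin n → ℝ,
            ∑ j, (Pi.single i (1:ℝ) : Fin n → ℝ) j * a j = a i := by
          intro a; simp [Pi.single_apply, ite_mul]
        have hargZ : argA (Pi.single i (1:ℝ)) A = Z := by
          ext a
          constructor
          · rintro ⟨haA, hmin⟩
            refine ⟨haA, le_antisymm ?_ (hnn a haA i)⟩
            have := hmin a₀ ha₀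
            rw [hsingle, hsingle, ha₀i] at this
            exact this
          · rintro ⟨haA, hai⟩
            refine ⟨haA, fun b hb => ?_⟩
            rw [hsingle, hsingle, hai]
            exact hnn b hb i
        have hF_face : IsFaceOf (convexHull ℝ A) F := by
          refine ⟨Pi.single i (1:ℝ), ?_⟩
          rw [suppFace_hull _ hfin, hargZ]
        have hF0 : ∀ x ∈ F, x i = 0 := by
          intro x hx
          have : F ⊆ {w : Fin n → ℝ | w i = 0} := by
            apply convexHull_min
            · intro a ha; exact ha.2
            · intro x hx y hy a b _ _ _
              show (a • x + b • y) i = 0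
              simp only [Set.mem_setOf_eq] at hx hy
              simp [hx, hy]
          exact this hx
        have hdisjF : Disjoint F (Δ i) := by
          rw [Set.disjoint_left]
          intro x hxF hxΔ
          have h1 := hF0 x hxF
          have h2 := hΔge i x hxΔ
          linarith
        have hsubF : ∀ K, IsFaceOf (convexHull ℝ A) K → Disjoint K (Δ i) → K ⊆ F := by
          rintro K ⟨γ', rfl⟩ hdisj
          rw [suppFace_hull γ' hfin]
          apply convexHull_mono (s := argA γ' A) (t := Z) ?_ |>.trans (le_refl _)
          intro a ha
          refine ⟨ha.1, ?_⟩
          by_contra hai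
          have haΔ : a ∈ Δ i := by
            rw [hΔ i]; exact subset_convexHull ℝ _ ⟨ha.1, hai⟩
          have haK : a ∈ suppFace γ' (convexHull ℝ A) := argA_mem_suppFace ha
          exact Set.disjoint_left.mp hdisj haK haΔ
        have hTO : thrownOut (convexHull ℝ A) (Δ i) = {F} := by
          ext K
          constructor
          · rintro ⟨hface, hdisj, hmax⟩
            exact hmax F hF_face hdisjF (hsubF K hface hdisj)
          · rintro rfl
            refine ⟨hF_face, hdisjF, fun K' hface' hdisj' hsub' => ?_⟩
            exact Set.Subset.antisymm hsub' (hsubF K' hface' hdisj')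
        constructor
        · intro K hK K' hK' hne
          rw [hTO] at hK hK'
          exact absurd (hK.trans hK'.symm) hne
        · rw [hTO, Set.sUnion_singleton, hΔ i]
          congr 1
          ext a
          constructor
          · rintro ⟨haA, hai⟩
            refine ⟨haA, fun haF => hai (hF0 a haF)⟩
          · rintro ⟨haA, haF⟩
            refine ⟨haA, fun hai => haF ?_⟩
            exact subset_convexHull ℝ Z ⟨haA, hai⟩
      · -- no point on the hyperplane: Δ i = Conv A and nothing is thrown out
        push_neg at hz
        have hAeq : {a ∈ A | a i ≠ 0} = A := by
          ext a; exact ⟨fun h => h.1, fun h => ⟨h, hz a h⟩⟩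
        have hΔeq : Δ i = convexHull ℝ A := by rw [hΔ i, hAeq]
        have hAne : A.Nonempty := (hAi_ne i).mono (fun a ha => ha.1)
        have hTO : thrownOut (convexHull ℝ A) (Δ i) = ∅ := by
          ext K
          simp only [Set.mem_empty_iff_false, iff_false]
          rintro ⟨⟨γ', rfl⟩, hdisj, -⟩
          obtain ⟨a, ha⟩ := argA_nonempty γ' hfin hAne
          have haK : a ∈ suppFace γ' (convexHull ℝ A) := argA_mem_suppFace ha
          have haΔ : a ∈ Δ i := by
            rw [hΔeq]; exact subset_convexHull ℝ A ha.1
          exact Set.disjoint_left.mp hdisj haK haΔ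
        constructor
        · intro K hK; rw [hTO] at hK; exact absurd hK (Set.notMem_empty K)
        · rw [hTO, Set.sUnion_empty, Set.diff_empty, hΔeq]
    · -- the inequality
      intro γ hγ
      have : {i | suppFace γ (Δ i) ⊆ suppFace γ (convexHull ℝ A)}
          = {i | ∃ a ∈ argA γ A, a i ≠ 0} := by
        ext i; exact hIeq γ i
      rw [this]
      exact hdim γ
  refine ⟨hsemi, ?_⟩
  -- suture characterization
  intro γ hγ
  constructor
  · rintro ⟨γ', hγ'0, hSeq, hcard⟩
    set I' : Set (Fin n) := {i | ∃ a ∈ argA γ' A, a i ≠ 0} with hI'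
    have hI'fin : I'.Finite := Set.toFinite I'
    have hset : {i | suppFace γ' (Δ i) ⊆ suppFace γ (convexHull ℝ A)} = I' := by
      ext i
      rw [Set.mem_setOf_eq, hSeq]
      exact hIeq γ' i
    rw [hset] at hcard
    refine ⟨hI'fin.toFinset, ?_, ?_⟩
    · rw [hSeq, suppFace_hull γ' hfin]
      apply convexHull_min
      · intro a ha j hj
        rw [Set.Finite.mem_toFinset] at hj
        by_contra haj
        exact hj ⟨a, ha, haj⟩
      · exact convex_coordSub _
    · rw [← hcard, Set.ncard_eq_toFinset_card I' hI'fin]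
  · rintro ⟨J, hJsub, hJcard⟩
    refine ⟨γ, hγ, rfl, ?_⟩
    have hset : {i | suppFace γ (Δ i) ⊆ suppFace γ (convexHull ℝ A)}
        = {i | ∃ a ∈ argA γ A, a i ≠ 0} := by
      ext i; exact hIeq γ i
    rw [hset]
    have hIJ : {i | ∃ a ∈ argA γ A, a i ≠ 0} ⊆ (↑J : Set (Fin n)) := by
      rintro i ⟨a, ha, hai⟩
      by_contra hiJ
      have haS : a ∈ suppFace γ (convexHull ℝ A) := argA_mem_suppFace ha
      have := hJsub haS i (by simpa using hiJ)
      exact hai this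
    have h1 : {i | ∃ a ∈ argA γ A, a i ≠ 0}.ncard ≤ J.card := by
      have := Set.ncard_le_ncard hIJ (Set.toFinite _)
      rwa [Set.ncard_coe_finset] at this
    have h2 := hdim γ
    exact le_antisymm (le_of_le_of_eq h1 hJcard) h2
end

section
/- Let n ≥ 1 and let T, T' ⊆ ℝⁿ_{≥0} be cocompact regions with T ⊆ T' (complements in ℝⁿ_{≥0} compact). Define for each nonempty coordinate subspace E ⊆ ℝⁿ the relative Newton number ν(T∩E, T'∩E) via the Kouchnirenko alternating sum applied within E to the difference of complements. Then Σ_E ν(T∩E, T'∩E), summed over all coordinate subspaces E of positive dimension, equals the normalized volume V_N((ℝⁿ_{≥0}∖T) ∖ (ℝⁿ_{≥0}∖T')) = V_N(T' ∖ T) computed with multiplicity n! in dimension n — i.e., the inclusion–exclusion identity Σ_{E} ν_E = V_N(T'∖T) holds. -/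
/-!
Exchanging the order of summation in `∑_J ν(T ∩ E_J, T' ∩ E_J)` weights the slice volumes at
`J'` by `∑_{J ⊇ J'} (-1)^{|J| - |J'|}`, which vanishes unless `J'` is the full coordinate set
(Möbius inversion on the boolean lattice). Only `n! · (Vol C - Vol C')` survives, where
`C' ⊆ C` are the compact complements of `T' ⊇ T`, and this is `n! · Vol (C \ C')`. The omitted
term `J = ∅` vanishes because the origin lies in both complements.
-/

open MeasureTheory

/-- The `|J|`-dimensional volume of the slice of `C ⊆ ℝⁿ` by the coordinate
subspace with coordinates in `J` (other coordinates set to `0`). -/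
noncomputable def volJ (n : ℕ) (J : Finset (Fin n)) (C : Set (Fin n → ℝ)) : ℝ :=
  (volume {y : J → ℝ |
      (fun i => if h : i ∈ J then y ⟨i, h⟩ else 0) ∈ C}).toReal

/-- The relative Newton number `ν(T ∩ E_J, T' ∩ E_J)` computed within the
coordinate subspace `E_J` by the Kouchnirenko alternating sum, applied to the
complements `C = ℝⁿ_{≥0}∖T` and `C' = ℝⁿ_{≥0}∖T'`. -/
noncomputable def nuRel (n : ℕ) (J : Finset (Fin n)) (C C' : Set (Fin n → ℝ)) : ℝ :=
  ∑ J' ∈ J.powerset, (-1 : ℝ) ^ (J.card - J'.card) * (J'.card.factorial : ℝ) *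
    (volJ n J' C - volJ n J' C')

open Finset

namespace Finset

variable {α R : Type*} [DecidableEq α] [CommRing R]

theorem sum_powerset_neg_one_pow_card' (s : Finset α) :
    ∑ t ∈ s.powerset, (-1 : R) ^ #t = if s = ∅ then 1 else 0 := by
  have := congrArg (Int.cast : ℤ → R) (sum_powerset_neg_one_pow_card (x := s))
  push_cast [apply_ite (Int.cast : ℤ → R)] at this
  exact this

theorem sum_Icc_neg_one_pow_card_sub {s u : Finset α} (h : s ⊆ u) :
    ∑ t ∈ Icc s u, (-1 : R) ^ (#t - #s) = if s = u then 1 else 0 := by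
  have hdisj : ∀ t ∈ (u \ s).powerset, Disjoint s t := fun t ht =>
    disjoint_of_subset_right (mem_powerset.1 ht) disjoint_sdiff
  rw [Icc_eq_image_powerset h, sum_image fun t ht t' ht' htt' => by
      rw [← union_sdiff_cancel_left (hdisj t ht), ← union_sdiff_cancel_left (hdisj t' ht')]
      exact congrArg (· \ s) htt']
  rw [sum_congr rfl fun t ht => by
      rw [card_union_of_disjoint (hdisj t ht), Nat.add_sub_cancel_left],
    sum_powerset_neg_one_pow_card']
  exact if_congr (sdiff_eq_empty_iff_subset.trans ⟨h.antisymm, fun hsu => hsu ▸ subset_rfl⟩)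
    rfl rfl

theorem sum_powerset_sum_powerset_neg_one_pow_card_sub_mul (u : Finset α) (g : Finset α → R) :
    ∑ s ∈ u.powerset, ∑ t ∈ s.powerset, (-1 : R) ^ (#s - #t) * g t = g u := by
  rw [sum_comm' (t' := u.powerset) (s' := fun t => Icc t u) fun s t => ?_]
  · rw [sum_eq_single_of_mem u (mem_powerset_self u) fun t ht htu => ?_]
    · simp
    · rw [← sum_mul, sum_Icc_neg_one_pow_card_sub (mem_powerset.1 ht), if_neg htu, zero_mul]
  · simp only [mem_powerset, mem_Icc]
    exact ⟨fun ⟨hsu, hts⟩ => ⟨⟨hts, hsu⟩, hts.trans hsu⟩, fun ⟨⟨hts, hsu⟩, _⟩ => ⟨hsu, hts⟩⟩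

end Finset

section NewtonNumber

variable {n : ℕ}

lemma volJ_univ (C : Set (Fin n → ℝ)) : volJ n univ C = volume.real C := by
  let φ := MeasurableEquiv.piCongrLeft (fun _ : Fin n => ℝ) (Equiv.subtypeUnivEquiv mem_univ)
  have hφ : ∀ y : ↥(univ : Finset (Fin n)) → ℝ,
      (fun i => if h : i ∈ univ then y ⟨i, h⟩ else 0) = φ y := fun y => by
    ext i
    simp [φ, MeasurableEquiv.coe_piCongrLeft, Equiv.piCongrLeft_apply]
  simp only [volJ, hφ]
  change (volume (φ ⁻¹' C)).toReal = _
  rw [← MeasurableEquiv.map_apply, (volume_measurePreserving_piCongrLeft _ _).map_eq,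
    measureReal_def]

lemma volJ_empty {C : Set (Fin n → ℝ)} (h0 : (fun _ => (0 : ℝ)) ∈ C) : volJ n ∅ C = 1 := by
  have hC : {y : ↥(∅ : Finset (Fin n)) → ℝ |
      (fun i => if h : i ∈ (∅ : Finset (Fin n)) then y ⟨i, h⟩ else 0) ∈ C} = Set.univ :=
    Set.eq_univ_of_forall fun y => by simpa using h0
  rw [volJ, hC, Measure.volume_pi_eq_dirac isEmptyElim]
  simp

lemma nuRel_empty {C C' : Set (Fin n → ℝ)} (h0 : (fun _ => (0 : ℝ)) ∈ C)
    (h0' : (fun _ => (0 : ℝ)) ∈ C') : nuRel n ∅ C C' = 0 := by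
  simp [nuRel, volJ_empty h0, volJ_empty h0']

lemma sum_nuRel (C C' : Set (Fin n → ℝ)) :
    ∑ J : Finset (Fin n), nuRel n J C C' =
      n.factorial * (volume.real C - volume.real C') := by
  have := sum_powerset_sum_powerset_neg_one_pow_card_sub_mul univ
    fun J : Finset (Fin n) => (#J).factorial * (volJ n J C - volJ n J C')
  simp only [powerset_univ, card_univ, Fintype.card_fin, volJ_univ, ← mul_assoc] at this
  exact this

end NewtonNumber

theorem stmt19_general (n : ℕ) (T T' : Set (Fin n → ℝ)) (hTT' : T ⊆ T')
    (hcT : IsCompact ({x : Fin n → ℝ | ∀ i, 0 ≤ x i} \ T))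
    (hcT' : IsCompact ({x : Fin n → ℝ | ∀ i, 0 ≤ x i} \ T'))
    (h0 : (fun _ => (0 : ℝ)) ∉ T') :
    ∑ J : Finset (Fin n),
      (if J = ∅ then 0 else
        nuRel n J ({x | ∀ i, 0 ≤ x i} \ T) ({x | ∀ i, 0 ≤ x i} \ T')) =
    (n.factorial : ℝ) *
      (volume (({x : Fin n → ℝ | ∀ i, 0 ≤ x i} \ T) \
        ({x : Fin n → ℝ | ∀ i, 0 ≤ x i} \ T'))).toReal := by
  set C : Set (Fin n → ℝ) := {x | ∀ i, 0 ≤ x i} \ T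
  set C' : Set (Fin n → ℝ) := {x | ∀ i, 0 ≤ x i} \ T'
  have h0C' : (fun _ => (0 : ℝ)) ∈ C' := ⟨fun _ => le_rfl, h0⟩
  have h0C : (fun _ => (0 : ℝ)) ∈ C := ⟨fun _ => le_rfl, fun h => h0 (hTT' h)⟩
  have hCC' : C' ⊆ C := Set.sdiff_subset_sdiff_right hTT'
  calc ∑ J : Finset (Fin n), (if J = ∅ then 0 else nuRel n J C C')
      = ∑ J : Finset (Fin n), nuRel n J C C' :=
        sum_congr rfl fun J _ => ite_eq_right_iff.2 fun hJ => hJ ▸ (nuRel_empty h0C h0C').symm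
    _ = n.factorial * (volume (C \ C')).toReal := by
        rw [sum_nuRel, ← measureReal_def,
          measureReal_sdiff hCC' hcT'.isClosed.measurableSet hcT.measure_lt_top.ne]

/-- the inclusion–exclusion identity
`Σ_{E, dim E ≥ 1} ν(T∩E, T'∩E) = V_N(T'∖T)` for cocompact regions
`T ⊆ T' ⊆ ℝⁿ_{≥0}`. -/
theorem stmt19 (n : ℕ) (hn : 1 ≤ n) (T T' : Set (Fin n → ℝ)) (hTT' : T ⊆ T')
    (hT : T ⊆ {x | ∀ i, 0 ≤ x i}) (hT' : T' ⊆ {x | ∀ i, 0 ≤ x i})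
    (hcT : IsCompact ({x : Fin n → ℝ | ∀ i, 0 ≤ x i} \ T))
    (hcT' : IsCompact ({x : Fin n → ℝ | ∀ i, 0 ≤ x i} \ T'))
    (h0 : (fun _ => (0 : ℝ)) ∉ T') :
    ∑ J : Finset (Fin n),
      (if J = ∅ then 0 else
        nuRel n J ({x | ∀ i, 0 ≤ x i} \ T) ({x | ∀ i, 0 ≤ x i} \ T')) =
    (n.factorial : ℝ) *
      (volume (({x : Fin n → ℝ | ∀ i, 0 ≤ x i} \ T) \
        ({x : Fin n → ℝ | ∀ i, 0 ≤ x i} \ T'))).toReal :=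
  stmt19_general n T T' hTT' hcT hcT' h0
end
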